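/- arXiv:1307.4180 — 3 statements merged into one kernel-verified Lean document; each statement's English description precedes it below -/
import Mathlib

section
/- For every positive even integer r, Σ_{k=1}^{r/2} Σ_{s=k}^{r/2} (k/s) · C(2s, s+k) · 2^{-2s} = Σ_{s=1}^{r/2} 2^{-(2s+1)} · C(2s, s), where C(n,m) denotes the binomial coefficient. -/
open Finset

lemma step_aux (t i : ℕ) :
    ((i:ℝ)+1) * (Nat.choose (2*t+2) (t+i+2)) =
      ((t:ℝ)+1) * (Nat.choose (2*t+1) (t+i+1)) - ((t:ℝ)+1) * (Nat.choose (2*t+1) (t+i+2)) := by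
  have h1 : (2*t+2) * Nat.choose (2*t+1) (t+i+1) = Nat.choose (2*t+2) (t+i+2) * (t+i+2) := by
    have := Nat.add_one_mul_choose_eq (2*t+1) (t+i+1)
    simpa [Nat.succ_eq_add_one, Nat.add_assoc] using this
  have h2 : Nat.choose (2*t+2) (t+i+2) = Nat.choose (2*t+1) (t+i+1) + Nat.choose (2*t+1) (t+i+2) := by
    have := Nat.choose_succ_succ (2*t+1) (t+i+1)
    simpa using this
  have h1' : ((2*t+2 : ℕ):ℝ) * (Nat.choose (2*t+1) (t+i+1)) = (Nat.choose (2*t+2) (t+i+2)) * ((t+i+2 : ℕ):ℝ) := by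
    exact_mod_cast congrArg (Nat.cast : ℕ → ℝ) h1
  have h2' : ((Nat.choose (2*t+2) (t+i+2) : ℕ):ℝ) = (Nat.choose (2*t+1) (t+i+1)) + (Nat.choose (2*t+1) (t+i+2)) := by
    exact_mod_cast congrArg (Nat.cast : ℕ → ℝ) h2
  push_cast at h1' h2' ⊢
  linear_combination (-1 : ℝ) * h1' - ((t:ℝ)+1) * h2'

lemma sumL (t : ℕ) :
    ∑ k ∈ Icc 1 (t+1), (k:ℝ) * Nat.choose (2*t+2) (t+1+k)
      = ((t:ℝ)+1) * Nat.choose (2*t+1) (t+1) := by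
  have hre : ∑ k ∈ Icc 1 (t+1), (k:ℝ) * Nat.choose (2*t+2) (t+1+k)
      = ∑ i ∈ range (t+1), ((((i:ℕ):ℝ)+1) * Nat.choose (2*t+2) (t+i+2)) := by
    have himg : Icc 1 (t+1) = (range (t+1)).image (· + 1) := by
      ext x
      simp only [Finset.mem_Icc, Finset.mem_image, Finset.mem_range]
      constructor
      · rintro ⟨h1, h2⟩; exact ⟨x-1, by omega, by omega⟩
      · rintro ⟨a, ha, rfl⟩; omega
    rw [himg, Finset.sum_image (by intro a _ b _ h; simpa using h)]
    apply Finset.sum_congr rfl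
    intro i _
    have h : t + 1 + (i + 1) = t + i + 2 := by omega
    rw [h]
    push_cast
    ring
  rw [hre]
  have : ∀ i ∈ range (t+1), (((i:ℕ):ℝ)+1) * Nat.choose (2*t+2) (t+i+2)
      = (fun j => ((t:ℝ)+1) * Nat.choose (2*t+1) (t+j+1)) i
        - (fun j => ((t:ℝ)+1) * Nat.choose (2*t+1) (t+j+1)) (i+1) := by
    intro i _
    simp only []
    have : t + (i+1) + 1 = t + i + 2 := by omega
    rw [this]
    exact step_aux t i
  rw [Finset.sum_congr rfl this, Finset.sum_range_sub']
  have hz : Nat.choose (2*t+1) (t+(t+1)+1) = 0 := Nat.choose_eq_zero_of_lt (by omega)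
  simp [hz]

lemma doubling (t : ℕ) : Nat.choose (2*t+2) (t+1) = 2 * Nat.choose (2*t+1) (t+1) := by
  have h2 : Nat.choose (2*t+2) (t+1) = Nat.choose (2*t+1) t + Nat.choose (2*t+1) (t+1) :=
    Nat.choose_succ_succ (2*t+1) t
  have hsymm : Nat.choose (2*t+1) t = Nat.choose (2*t+1) (t+1) := by
    have := Nat.choose_symm (n := 2*t+1) (k := t) (by omega)
    have he : 2*t+1-t = t+1 := by omega
    rw [he] at this
    omega
  omega

theorem stmt2 (r : ℕ) (hr : 0 < r) (he : Even r) :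
    ∑ k ∈ Finset.Icc 1 (r / 2), ∑ s ∈ Finset.Icc k (r / 2),
        ((k : ℝ) / s) * (Nat.choose (2 * s) (s + k)) * (1 / 2) ^ (2 * s)
      = ∑ s ∈ Finset.Icc 1 (r / 2), (1 / 2 : ℝ) ^ (2 * s + 1) * (Nat.choose (2 * s) s) := by
  set n := r / 2 with hn
  rw [Finset.sum_comm' (t' := Icc 1 n) (s' := fun s => Icc 1 s)
    (by intro k s; simp only [Finset.mem_Icc]; omega)]
  apply Finset.sum_congr rfl
  intro s hs
  have hs1 : 1 ≤ s := (Finset.mem_Icc.mp hs).1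
  obtain ⟨t, rfl⟩ : ∃ t, s = t + 1 := ⟨s - 1, by omega⟩
  have ht : ((t:ℝ)+1) ≠ 0 := by positivity
  have key : ∑ k ∈ Icc 1 (t+1), ((k : ℝ) / ((t+1 : ℕ) : ℝ)) * (Nat.choose (2 * (t+1)) ((t+1) + k)) * (1 / 2) ^ (2 * (t+1))
      = ((1:ℝ)/2)^(2*(t+1)) / ((t:ℝ)+1) * ∑ k ∈ Icc 1 (t+1), (k:ℝ) * Nat.choose (2*t+2) (t+1+k) := by
    rw [Finset.mul_sum]
    apply Finset.sum_congr rfl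
    intro k _
    have h2 : 2 * (t+1) = 2*t+2 := by ring
    rw [h2]
    push_cast
    field_simp
  rw [key, sumL]
  have hd : (Nat.choose (2*(t+1)) (t+1) : ℝ) = 2 * Nat.choose (2*t+1) (t+1) := by
    have := doubling t
    have h22 : 2*(t+1) = 2*t+2 := by ring
    rw [h22]
    exact_mod_cast this
  rw [hd]
  field_simp
  ring
end

section
/- Define α(r) = Σ_{y=1}^{r} y · Σ_{h=y, h+y even}^{r} (1/h) · C(h, (h+y)/2) · 2^{-h}. Then lim_{r→∞} α(r)/√r = √(2/π). -/
open Filter Finset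

/-- α(r) = Σ_{y=1}^{r} y Σ_{h=y, h+y even}^{r} (1/h) C(h,(h+y)/2) 2^{-h}. -/
noncomputable def alpha (r : ℕ) : ℝ :=
  ∑ y ∈ Finset.Icc 1 r, (y : ℝ) *
    ∑ h ∈ (Finset.Icc y r).filter (fun h => (h + y) % 2 = 0),
      (1 / (h : ℝ)) * (Nat.choose h ((h + y) / 2)) * (1 / 2) ^ h


lemma key_id (h k : ℕ) (hk1 : 1 ≤ k) (hkh : k ≤ h) :
    (2 * (k : ℝ) - h) * (Nat.choose h k : ℝ)
      = (h : ℝ) * ((Nat.choose (h - 1) (k - 1) : ℝ) - (Nat.choose (h - 1) k : ℝ)) := by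
  have h1 : 1 ≤ h := le_trans hk1 hkh
  -- h * C(h-1, k-1) = k * C(h, k)
  have A : h * Nat.choose (h - 1) (k - 1) = k * Nat.choose h k := by
    have := Nat.add_one_mul_choose_eq (h - 1) (k - 1)
    simp only [Nat.succ_eq_add_one, Nat.sub_add_cancel h1, Nat.sub_add_cancel hk1] at this
    rw [this, Nat.mul_comm]
  -- Pascal: C(h,k) = C(h-1, k-1) + C(h-1, k)
  have P : Nat.choose h k = Nat.choose (h - 1) (k - 1) + Nat.choose (h - 1) k := by
    have := Nat.choose_succ_succ (h - 1) (k - 1)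
    simp only [Nat.succ_eq_add_one, Nat.sub_add_cancel h1, Nat.sub_add_cancel hk1] at this
    omega
  have A' : (h : ℝ) * (Nat.choose (h - 1) (k - 1) : ℝ) = (k : ℝ) * (Nat.choose h k : ℝ) := by
    exact_mod_cast congrArg (fun x : ℕ => (x : ℝ)) A
  have P' : (Nat.choose h k : ℝ) = (Nat.choose (h - 1) (k - 1) : ℝ) + (Nat.choose (h - 1) k : ℝ) := by
    exact_mod_cast congrArg (fun x : ℕ => (x : ℝ)) P
  nlinarith [A', P']

lemma inner_id (h : ℕ) (hh : 1 ≤ h) :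
    ∑ y ∈ (Finset.Icc 1 h).filter (fun y => (h + y) % 2 = 0),
      (y : ℝ) * (Nat.choose h ((h + y) / 2) : ℝ)
      = (h : ℝ) * (Nat.choose (h - 1) (h / 2) : ℝ) := by
  have step1 : ∑ y ∈ (Finset.Icc 1 h).filter (fun y => (h + y) % 2 = 0),
      (y : ℝ) * (Nat.choose h ((h + y) / 2) : ℝ)
      = ∑ k ∈ Finset.Icc (h / 2 + 1) h, ((2 * k - h : ℕ) : ℝ) * (Nat.choose h k : ℝ) := by
    apply Finset.sum_nbij' (i := fun y => (h + y) / 2) (j := fun k => 2 * k - h)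
    · intro a ha
      simp only [Finset.mem_filter, Finset.mem_Icc] at ha ⊢
      omega
    · intro a ha
      simp only [Finset.mem_filter, Finset.mem_Icc] at ha ⊢
      omega
    · intro a ha
      simp only [Finset.mem_filter, Finset.mem_Icc] at ha
      omega
    · intro a ha
      simp only [Finset.mem_Icc] at ha
      omega
    · intro a ha
      simp only [Finset.mem_filter, Finset.mem_Icc] at ha
      have h1 : 2 * ((h + a) / 2) - h = a := by omega
      rw [h1]
  rw [step1]
  have hsplit : Finset.Icc (h / 2 + 1) h = Finset.Ico (h / 2 + 1) (h + 1) := by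
    rw [Finset.Ico_add_one_right_eq_Icc]
  rw [hsplit, Finset.sum_Ico_eq_sum_range]
  have hm : h + 1 - (h / 2 + 1) = h - h / 2 := by omega
  rw [hm]
  set F : ℕ → ℝ := fun i => (h : ℝ) * (Nat.choose (h - 1) (h / 2 + i) : ℝ) with hF
  have step2 : ∀ i ∈ Finset.range (h - h / 2),
      ((2 * (h / 2 + 1 + i) - h : ℕ) : ℝ) * (Nat.choose h (h / 2 + 1 + i) : ℝ)
        = F i - F (i + 1) := by
    intro i hi
    simp only [Finset.mem_range] at hi
    set k := h / 2 + 1 + i with hk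
    have hk1 : 1 ≤ k := by omega
    have hkh : k ≤ h := by omega
    have hcast : ((2 * k - h : ℕ) : ℝ) = 2 * (k : ℝ) - h := by
      have : h ≤ 2 * k := by omega
      push_cast [this]
      ring
    rw [hcast, key_id h k hk1 hkh, hF]
    have e1 : k - 1 = h / 2 + i := by omega
    have e2 : k = h / 2 + (i + 1) := by omega
    beta_reduce
    rw [e1, e2]
    ring
  rw [Finset.sum_congr rfl step2, Finset.sum_range_sub' F]
  have : h / 2 + (h - h / 2) = h := by omega
  simp only [hF, add_zero, this]
  rw [Nat.choose_eq_zero_of_lt (by omega : h - 1 < h)]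
  simp

lemma alpha_eq (r : ℕ) :
    alpha r = ∑ h ∈ Finset.Icc 1 r, (1 / 2 : ℝ) ^ h * (Nat.choose (h - 1) (h / 2) : ℝ) := by
  unfold alpha
  have step1 : ∀ y ∈ Finset.Icc 1 r,
      (y : ℝ) * ∑ h ∈ (Finset.Icc y r).filter (fun h => (h + y) % 2 = 0),
        (1 / (h : ℝ)) * (Nat.choose h ((h + y) / 2)) * (1 / 2) ^ h
      = ∑ h ∈ Finset.Icc 1 r,
          (if y ≤ h ∧ (h + y) % 2 = 0 then
            (y : ℝ) * ((1 / (h : ℝ)) * (Nat.choose h ((h + y) / 2)) * (1 / 2) ^ h) else 0) := by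
    intro y hy
    simp only [Finset.mem_Icc] at hy
    rw [Finset.mul_sum, ← Finset.sum_filter]
    congr 1
    ext a
    simp only [Finset.mem_filter, Finset.mem_Icc]
    constructor
    · rintro ⟨⟨h1, h2⟩, h3⟩; exact ⟨⟨by omega, h2⟩, by omega, h3⟩
    · rintro ⟨⟨h1, h2⟩, h3, h4⟩; exact ⟨⟨by omega, h2⟩, h4⟩
  rw [Finset.sum_congr rfl step1, Finset.sum_comm]
  apply Finset.sum_congr rfl
  intro h hmem
  simp only [Finset.mem_Icc] at hmem
  have hh : 1 ≤ h := hmem.1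
  have hr : h ≤ r := hmem.2
  rw [← Finset.sum_filter]
  have hset : (Finset.Icc 1 r).filter (fun y => y ≤ h ∧ (h + y) % 2 = 0)
      = (Finset.Icc 1 h).filter (fun y => (h + y) % 2 = 0) := by
    ext a
    simp only [Finset.mem_filter, Finset.mem_Icc]
    omega
  rw [hset]
  have : ∀ y ∈ (Finset.Icc 1 h).filter (fun y => (h + y) % 2 = 0),
      (y : ℝ) * ((1 / (h : ℝ)) * (Nat.choose h ((h + y) / 2)) * (1 / 2) ^ h)
      = ((1 / (h : ℝ)) * (1 / 2) ^ h) * ((y : ℝ) * (Nat.choose h ((h + y) / 2) : ℝ)) := by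
    intro y _; ring
  rw [Finset.sum_congr rfl this, ← Finset.mul_sum, inner_id h hh]
  have hh0 : (h : ℝ) ≠ 0 := by positivity
  field_simp

lemma sqrt_nat_tendsto : Tendsto (fun n : ℕ => Real.sqrt n) atTop atTop := by
  have h1 : Tendsto Real.sqrt atTop atTop := by
    rw [tendsto_atTop_atTop]
    intro b
    refine ⟨max (b ^ 2) 0, fun a ha => ?_⟩
    have h0 : (0:ℝ) ≤ a := le_trans (le_max_right _ _) ha
    have h2 : b ^ 2 ≤ a := le_trans (le_max_left _ _) ha
    calc b ≤ |b| := le_abs_self b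
    _ = Real.sqrt (b ^ 2) := (Real.sqrt_sq_eq_abs b).symm
    _ ≤ Real.sqrt a := Real.sqrt_le_sqrt h2
  exact h1.comp tendsto_natCast_atTop_atTop

lemma central_tendsto :
    Tendsto (fun k : ℕ => (Nat.choose (2 * k) k : ℝ) * Real.sqrt k / 4 ^ k)
      atTop (nhds (1 / Real.sqrt Real.pi)) := by
  have hs := Stirling.tendsto_stirlingSeq_sqrt_pi
  have h2k : Tendsto (fun k : ℕ => 2 * k) atTop atTop :=
    tendsto_atTop_atTop.mpr fun b => ⟨b, fun a ha => by omega⟩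
  have h2 : Tendsto (fun k => Stirling.stirlingSeq (2 * k)) atTop (nhds (Real.sqrt Real.pi)) :=
    hs.comp h2k
  have hpi : (0:ℝ) < Real.sqrt Real.pi := Real.sqrt_pos.mpr Real.pi_pos
  have hlim : Tendsto (fun k => Stirling.stirlingSeq (2 * k) / Stirling.stirlingSeq k ^ 2)
      atTop (nhds (Real.sqrt Real.pi / Real.sqrt Real.pi ^ 2)) :=
    h2.div (hs.pow 2) (by positivity)
  have hval : Real.sqrt Real.pi / Real.sqrt Real.pi ^ 2 = 1 / Real.sqrt Real.pi := by
    field_simp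
  rw [hval] at hlim
  apply hlim.congr'
  filter_upwards [Ici_mem_atTop 1] with k hk
  have hk1 : 1 ≤ k := hk
  have kpos : (0:ℝ) < k := by exact_mod_cast hk1
  have sqk : (0:ℝ) < Real.sqrt k := Real.sqrt_pos.mpr kpos
  have epos : (0:ℝ) < Real.exp 1 := Real.exp_pos 1
  have fact_pos : (0:ℝ) < (Nat.factorial k : ℝ) := by exact_mod_cast k.factorial_pos
  have c1 : ((Nat.factorial (2 * k) : ℕ) : ℝ) = (Nat.choose (2 * k) k : ℝ) * (Nat.factorial k : ℝ) * (Nat.factorial k : ℝ) := by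
    have h3 : Nat.choose (2 * k) k * Nat.factorial k * Nat.factorial (2 * k - k) = Nat.factorial (2 * k) :=
      Nat.choose_mul_factorial_mul_factorial (by omega)
    have h4 : 2 * k - k = k := by omega
    rw [h4] at h3
    exact_mod_cast h3.symm
  unfold Stirling.stirlingSeq
  push_cast
  rw [c1]
  have A : Real.sqrt (2 * (2 * (k:ℝ))) = 2 * Real.sqrt k := by
    rw [show 2 * (2 * (k:ℝ)) = 2 ^ 2 * k by ring, Real.sqrt_mul (by positivity),
      Real.sqrt_sq (by norm_num)]
  have B : Real.sqrt (2 * (k:ℝ)) ^ 2 = 2 * k := Real.sq_sqrt (by positivity)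
  have D : (4:ℝ) ^ k = 2 ^ (2 * k) := by
    rw [show (4:ℝ) = 2 ^ 2 by norm_num, ← pow_mul]
  have C2 : (2 * (k:ℝ)) ^ (2 * k) = 2 ^ (2 * k) * (k:ℝ) ^ (2 * k) := mul_pow 2 (k:ℝ) (2 * k)
  rw [A]
  simp only [div_pow, mul_pow]
  rw [B, D]
  have hne1 : ((k:ℝ)) ^ k ≠ 0 := by positivity
  have hne2 : (2:ℝ) ^ (2 * k) ≠ 0 := by positivity
  have hne3 : Real.exp 1 ^ (2 * k) ≠ 0 := by positivity
  have hne4 : Real.exp 1 ^ k ≠ 0 := by positivity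
  field_simp
  have E1 : Real.exp ((k:ℝ) * 2) = Real.exp (k:ℝ) ^ 2 := by
    rw [mul_comm, two_mul, Real.exp_add]; ring
  ring_nf
  rw [Real.sq_sqrt kpos.le]
  ring

noncomputable def bseq (h : ℕ) : ℝ := (1 / 2 : ℝ) ^ h * (Nat.choose (h - 1) (h / 2) : ℝ)

lemma tendsto_of_even_odd {u : ℕ → ℝ} {l : ℝ}
    (he : Tendsto (fun k => u (2 * k)) atTop (nhds l))
    (ho : Tendsto (fun k => u (2 * k + 1)) atTop (nhds l)) :
    Tendsto u atTop (nhds l) := by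
  rw [Filter.tendsto_atTop'] at he ho ⊢
  intro s hs
  obtain ⟨N1, h1⟩ := he s hs
  obtain ⟨N2, h2⟩ := ho s hs
  refine ⟨2 * N1 + 2 * N2 + 1, fun n hn => ?_⟩
  rcases Nat.even_or_odd n with ⟨m, hm⟩ | ⟨m, hm⟩
  · have hn' : n = 2 * m := by omega
    rw [hn']; exact h1 m (by omega)
  · have hn' : n = 2 * m + 1 := by omega
    rw [hn']; exact h2 m (by omega)

lemma half_central (k : ℕ) (hk : 1 ≤ k) :
    2 * Nat.choose (2 * k - 1) k = Nat.choose (2 * k) k := by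
  have hsymm : Nat.choose (2 * k - 1) (k - 1) = Nat.choose (2 * k - 1) k := by
    have h1 : (2 * k - 1) - k = k - 1 := by omega
    rw [← h1]
    exact Nat.choose_symm (n := 2 * k - 1) (k := k) (by omega)
  have hP : Nat.choose (2 * k) k = Nat.choose (2 * k - 1) (k - 1) + Nat.choose (2 * k - 1) k := by
    have h2k : 2 * k - 1 + 1 = 2 * k := by omega
    have hk' : k - 1 + 1 = k := by omega
    have hch := Nat.choose_succ_succ (2 * k - 1) (k - 1)
    rw [Nat.succ_eq_add_one, Nat.succ_eq_add_one, h2k, hk'] at hch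
    omega
  omega

lemma bseq_tendsto :
    Tendsto (fun h : ℕ => bseq h * Real.sqrt h) atTop
      (nhds (Real.sqrt (2 / Real.pi) / 2)) := by
  have hq := central_tendsto
  have hpi : (0:ℝ) < Real.sqrt Real.pi := Real.sqrt_pos.mpr Real.pi_pos
  have hval : Real.sqrt (2 / Real.pi) / 2 = Real.sqrt 2 / 2 * (1 / Real.sqrt Real.pi) := by
    rw [Real.sqrt_div (by norm_num : (0:ℝ) ≤ 2) Real.pi]
    ring
  apply tendsto_of_even_odd
  · -- even case
    have ht : Tendsto (fun k : ℕ => Real.sqrt 2 / 2 *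
        ((Nat.choose (2 * k) k : ℝ) * Real.sqrt k / 4 ^ k)) atTop
        (nhds (Real.sqrt 2 / 2 * (1 / Real.sqrt Real.pi))) := hq.const_mul _
    rw [hval]
    apply ht.congr'
    filter_upwards [Ici_mem_atTop 1] with k hk
    have hk1 : (1:ℕ) ≤ k := hk
    unfold bseq
    have e1 : 2 * k / 2 = k := by omega
    have e2 : ((Nat.choose (2 * k - 1) k : ℕ) : ℝ)
        = (Nat.choose (2 * k) k : ℝ) / 2 := by
      have := half_central k hk1
      have h2 : (2:ℝ) * (Nat.choose (2 * k - 1) k : ℝ) = (Nat.choose (2 * k) k : ℝ) := by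
        exact_mod_cast this
      linarith
    have e3 : Real.sqrt ((2 * k : ℕ) : ℝ) = Real.sqrt 2 * Real.sqrt k := by
      push_cast
      rw [Real.sqrt_mul (by norm_num)]
    have e4 : ((1:ℝ) / 2) ^ (2 * k) = 1 / 4 ^ k := by
      have h4 : ((1:ℝ)/2) ^ (2*k) = ((1:ℝ)/4) ^ k := by rw [pow_mul]; norm_num
      rw [h4, div_pow, one_pow]
    rw [e1, e2, e3, e4]
    ring
  · -- odd case
    have hw : Tendsto (fun k : ℕ => Real.sqrt ((2 * k + 1 : ℝ) / k)) atTop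
        (nhds (Real.sqrt 2)) := by
      have hfrac : Tendsto (fun k : ℕ => (2 * k + 1 : ℝ) / k) atTop (nhds 2) := by
        have h1 : Tendsto (fun k : ℕ => 2 + 1 / (k : ℝ)) atTop (nhds (2 + 0)) :=
          tendsto_const_nhds.add tendsto_one_div_atTop_nhds_zero_nat
        rw [add_zero] at h1
        apply h1.congr'
        filter_upwards [Ici_mem_atTop 1] with k hk
        have : (k:ℝ) ≠ 0 := by
          have : (1:ℕ) ≤ k := hk
          positivity
        field_simp
      exact (Real.continuous_sqrt.continuousAt.tendsto.comp hfrac)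
    have ht : Tendsto (fun k : ℕ => (1 / 2 : ℝ) *
        ((Nat.choose (2 * k) k : ℝ) * Real.sqrt k / 4 ^ k) * Real.sqrt ((2 * k + 1 : ℝ) / k))
        atTop (nhds ((1 / 2 : ℝ) * (1 / Real.sqrt Real.pi) * Real.sqrt 2)) :=
      (hq.const_mul _).mul hw
    have hval2 : Real.sqrt (2 / Real.pi) / 2 = 1 / 2 * (1 / Real.sqrt Real.pi) * Real.sqrt 2 := by
      rw [hval]; ring
    rw [hval2]
    apply ht.congr'
    filter_upwards [Ici_mem_atTop 1] with k hk
    have hk1 : (1:ℕ) ≤ k := hk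
    have kpos : (0:ℝ) < k := by exact_mod_cast hk1
    have sqk : (0:ℝ) < Real.sqrt k := Real.sqrt_pos.mpr kpos
    unfold bseq
    have e1 : (2 * k + 1) / 2 = k := by omega
    have e0 : 2 * k + 1 - 1 = 2 * k := by omega
    have e3 : Real.sqrt ((2 * k + 1 : ℝ) / k) = Real.sqrt (2 * k + 1) / Real.sqrt k := by
      rw [Real.sqrt_div (by positivity)]
    have e4 : ((1:ℝ) / 2) ^ (2 * k + 1) = 1 / 2 * (1 / 4 ^ k) := by
      rw [pow_succ, pow_mul, div_pow, one_pow]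
      norm_num
      simp only [one_div]
      rw [inv_pow, mul_comm]
    have e5 : Real.sqrt ((2 * k + 1 : ℕ) : ℝ) = Real.sqrt ((2 : ℝ) * k + 1) := by
      push_cast; ring_nf
    rw [e0, e1, e3, e4, e5]
    field_simp

lemma one_div_sqrt_bounds (n : ℕ) :
    2 * Real.sqrt (n + 1) - 2 ≤ (∑ i ∈ Finset.range n, 1 / Real.sqrt (i + 1)) ∧
    (∑ i ∈ Finset.range n, 1 / Real.sqrt (i + 1)) ≤ 2 * Real.sqrt n := by
  constructor
  · have htel : ∑ i ∈ Finset.range n,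
        (2 * Real.sqrt ((i + 1 : ℕ) + 1) - 2 * Real.sqrt ((i : ℕ) + 1))
        = 2 * Real.sqrt ((n : ℕ) + 1) - 2 * Real.sqrt ((0 : ℕ) + 1) :=
      Finset.sum_range_sub (fun i => 2 * Real.sqrt ((i : ℕ) + 1)) n
    have h1 : Real.sqrt ((0 : ℕ) + 1) = 1 := by norm_num
    rw [h1] at htel
    calc 2 * Real.sqrt (n + 1) - 2
        = ∑ i ∈ Finset.range n,
            (2 * Real.sqrt ((i + 1 : ℕ) + 1) - 2 * Real.sqrt ((i : ℕ) + 1)) := by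
          rw [htel]; push_cast; ring
      _ ≤ ∑ i ∈ Finset.range n, 1 / Real.sqrt (i + 1) := by
          apply Finset.sum_le_sum
          intro i _
          have apos : (0:ℝ) < Real.sqrt (i + 1) := Real.sqrt_pos.mpr (by positivity)
          have ha : Real.sqrt ((i:ℝ) + 1) ^ 2 = (i:ℝ) + 1 := Real.sq_sqrt (by positivity)
          have hc : Real.sqrt ((i:ℝ) + 2) ^ 2 = (i:ℝ) + 2 := Real.sq_sqrt (by positivity)
          have hc0 : (0:ℝ) ≤ Real.sqrt ((i:ℝ) + 2) := Real.sqrt_nonneg _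
          have hcast : Real.sqrt (((i + 1 : ℕ) : ℝ) + 1) = Real.sqrt ((i:ℝ) + 2) := by
            norm_cast
          have key : 2 * Real.sqrt ((i:ℝ) + 2) * Real.sqrt ((i:ℝ) + 1) ≤ 2 * ((i:ℝ) + 1) + 1 := by
            nlinarith [sq_nonneg (Real.sqrt ((i:ℝ) + 2) - Real.sqrt ((i:ℝ) + 1))]
          rw [hcast, le_div_iff₀ apos]
          nlinarith [key]
      _ = ∑ i ∈ Finset.range n, 1 / Real.sqrt (i + 1) := rfl
  · have htel : ∑ i ∈ Finset.range n,
        (2 * Real.sqrt ((i + 1 : ℕ)) - 2 * Real.sqrt (i : ℕ))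
        = 2 * Real.sqrt (n : ℕ) - 2 * Real.sqrt (0 : ℕ) :=
      Finset.sum_range_sub (fun i => 2 * Real.sqrt (i : ℕ)) n
    have h0 : Real.sqrt ((0:ℕ) : ℝ) = 0 := by norm_num
    rw [h0] at htel
    calc ∑ i ∈ Finset.range n, 1 / Real.sqrt (i + 1)
        ≤ ∑ i ∈ Finset.range n,
            (2 * Real.sqrt ((i + 1 : ℕ)) - 2 * Real.sqrt (i : ℕ)) := by
          apply Finset.sum_le_sum
          intro i _
          have apos : (0:ℝ) < Real.sqrt ((i:ℝ) + 1) := Real.sqrt_pos.mpr (by positivity)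
          have ha : Real.sqrt ((i:ℝ) + 1) ^ 2 = (i:ℝ) + 1 := Real.sq_sqrt (by positivity)
          have hb : Real.sqrt (i:ℝ) ^ 2 = (i:ℝ) := Real.sq_sqrt (by positivity)
          have hb0 : (0:ℝ) ≤ Real.sqrt (i:ℝ) := Real.sqrt_nonneg _
          have hcast : Real.sqrt ((i + 1 : ℕ) : ℝ) = Real.sqrt ((i:ℝ) + 1) := by
            norm_cast
          rw [hcast, div_le_iff₀ apos]
          nlinarith [sq_nonneg (Real.sqrt ((i:ℝ) + 1) - Real.sqrt (i:ℝ))]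
      _ = 2 * Real.sqrt n - 2 * 0 := by rw [htel]
      _ = 2 * Real.sqrt n := by ring

lemma sum_sqrt_div :
    Tendsto (fun n : ℕ => (∑ i ∈ Finset.range n, 1 / Real.sqrt (i + 1)) / Real.sqrt n)
      atTop (nhds 2) := by
  have hlow : Tendsto (fun n : ℕ => (2 * Real.sqrt (n + 1) - 2) / Real.sqrt n) atTop (nhds 2) := by
    have h1 : Tendsto (fun n : ℕ => ((n:ℝ) + 1) / n) atTop (nhds 1) := by
      have h2 : Tendsto (fun n : ℕ => 1 + 1 / (n:ℝ)) atTop (nhds (1 + 0)) :=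
        tendsto_const_nhds.add tendsto_one_div_atTop_nhds_zero_nat
      rw [add_zero] at h2
      apply h2.congr'
      filter_upwards [Ici_mem_atTop 1] with n hn
      have hn0 : (n:ℝ) ≠ 0 := by
        have : (1:ℕ) ≤ n := hn
        positivity
      field_simp
    have hsq : Tendsto (fun n : ℕ => Real.sqrt (((n:ℝ) + 1) / n)) atTop (nhds 1) := by
      have := (Real.continuous_sqrt.continuousAt (x := (1:ℝ))).tendsto.comp h1
      simpa [Function.comp_def] using this
    have hdiv : Tendsto (fun n : ℕ => Real.sqrt ((n:ℝ) + 1) / Real.sqrt n) atTop (nhds 1) := by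
      apply hsq.congr'
      filter_upwards [Ici_mem_atTop 1] with n hn
      rw [Real.sqrt_div (by positivity)]
    have hzero : Tendsto (fun n : ℕ => 2 / Real.sqrt n) atTop (nhds 0) :=
      tendsto_const_nhds.div_atTop sqrt_nat_tendsto
    have hcomb : Tendsto (fun n : ℕ => 2 * (Real.sqrt ((n:ℝ) + 1) / Real.sqrt n) - 2 / Real.sqrt n)
        atTop (nhds (2 * 1 - 0)) := (hdiv.const_mul 2).sub hzero
    norm_num at hcomb
    apply hcomb.congr'
    filter_upwards with n
    ring
  have hup : Tendsto (fun n : ℕ => (2 : ℝ)) atTop (nhds 2) := tendsto_const_nhds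
  apply tendsto_of_tendsto_of_tendsto_of_le_of_le' hlow hup
  · filter_upwards [Ici_mem_atTop 1] with n hn
    have hb := (one_div_sqrt_bounds n).1
    have hs : (0:ℝ) < Real.sqrt n := Real.sqrt_pos.mpr (by
      have : (1:ℕ) ≤ n := hn
      positivity)
    gcongr
  · filter_upwards [Ici_mem_atTop 1] with n hn
    have hb := (one_div_sqrt_bounds n).2
    have hs : (0:ℝ) < Real.sqrt n := Real.sqrt_pos.mpr (by
      have : (1:ℕ) ≤ n := hn
      positivity)
    rw [div_le_iff₀ hs]
    linarith



theorem stmt8 :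
    Tendsto (fun r : ℕ => alpha r / Real.sqrt r) atTop (nhds (Real.sqrt (2 / Real.pi))) := by
  set c : ℝ := Real.sqrt (2 / Real.pi) with hc
  set g : ℕ → ℝ := fun i => 1 / Real.sqrt (i + 1) with hg
  set G : ℕ → ℝ := fun n => ∑ i ∈ Finset.range n, g i with hG
  set e : ℕ → ℝ := fun i => bseq (1 + i) - c / 2 * g i with he
  set E : ℕ → ℝ := fun n => ∑ i ∈ Finset.range n, e i with hE
  have hgpos : ∀ i, 0 < g i := by
    intro i
    have : (0:ℝ) < Real.sqrt (i + 1) := Real.sqrt_pos.mpr (by positivity)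
    positivity
  -- alpha in terms of range sums
  have halpha : ∀ r, alpha r = c / 2 * G r + E r := by
    intro r
    rw [alpha_eq r]
    have h1 : Finset.Icc 1 r = Finset.Ico 1 (r + 1) := by rw [Finset.Ico_add_one_right_eq_Icc]
    rw [h1, Finset.sum_Ico_eq_sum_range]
    have h2 : r + 1 - 1 = r := by omega
    rw [h2, hG, hE, Finset.mul_sum, ← Finset.sum_add_distrib]
    apply Finset.sum_congr rfl
    intro i _
    simp only [he, bseq]
    ring
  -- G tends to atTop
  have hGtop : Tendsto G atTop atTop := by
    have hlow : Tendsto (fun n : ℕ => 2 * Real.sqrt ((n:ℝ) + 1) - 2) atTop atTop := by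
      apply tendsto_atTop_add_const_right
      apply Tendsto.const_mul_atTop (by norm_num : (0:ℝ) < 2)
      have : Tendsto (fun n : ℕ => Real.sqrt ((n + 1 : ℕ) : ℝ)) atTop atTop :=
        sqrt_nat_tendsto.comp (tendsto_add_atTop_nat 1)
      apply this.congr
      intro n
      push_cast
      ring_nf
    apply tendsto_atTop_mono (fun n => (one_div_sqrt_bounds n).1) hlow
  -- little-o
  have hlo : Asymptotics.IsLittleO atTop e g := by
    have hnz : ∀ x, g x = 0 → e x = 0 := fun x hx => absurd hx (hgpos x).ne'
    apply Asymptotics.isLittleO_of_tendsto hnz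
    have hb : Tendsto (fun i : ℕ => bseq (1 + i) * Real.sqrt ((1 + i : ℕ) : ℝ) - c / 2)
        atTop (nhds (c / 2 - c / 2)) := by
      apply Tendsto.sub_const
      have hplus : Tendsto (fun n : ℕ => 1 + n) atTop atTop :=
        tendsto_atTop_atTop.mpr (fun b => ⟨b, fun a ha => by omega⟩)
      exact bseq_tendsto.comp hplus
    rw [sub_self] at hb
    apply hb.congr
    intro i
    have hsq : (0:ℝ) < Real.sqrt ((i:ℝ) + 1) := Real.sqrt_pos.mpr (by positivity)
    have hcast : ((1 + i : ℕ) : ℝ) = (i:ℝ) + 1 := by push_cast; ring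
    simp only [he, hg, hcast]
    field_simp
  have hsum := hlo.sum_range (fun i => (hgpos i).le) hGtop
  have hEG : Tendsto (fun n => E n / G n) atTop (nhds 0) := by
    exact hsum.tendsto_div_nhds_zero
  have hGdiv : Tendsto (fun n : ℕ => G n / Real.sqrt n) atTop (nhds 2) := sum_sqrt_div
  have hmain : Tendsto (fun r : ℕ => c / 2 * (G r / Real.sqrt r) + E r / G r * (G r / Real.sqrt r))
      atTop (nhds (c / 2 * 2 + 0 * 2)) :=
    ((hGdiv.const_mul _).add (hEG.mul hGdiv))
  have hval : c / 2 * 2 + 0 * 2 = c := by ring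
  rw [hval] at hmain
  apply hmain.congr'
  -- eventual positivity of G
  have hGposhalf : ∀ n, 1 ≤ n → 0 < G n := by
    intro n hn
    apply Finset.sum_pos (fun i _ => hgpos i)
    exact Finset.nonempty_range_iff.mpr (by omega)
  filter_upwards [Ici_mem_atTop 1] with r hr
  have hr1 : (1:ℕ) ≤ r := hr
  have hGr : 0 < G r := hGposhalf r hr1
  have hsr : (0:ℝ) < Real.sqrt r := Real.sqrt_pos.mpr (by positivity)
  rw [halpha r]
  field_simp
end

section
/- For a simple symmetric random walk (S_h) on ℤ started at 0, and for any positive integers y and h with y ≤ h, the probability that the first hitting time T_y of level y equals h is (y/h) · P(S_h = y). -/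
open Finset

/-- Position after `k` steps of the walk encoded by `ω` (true = +1 step, false = -1 step). -/
def walkPos (h : ℕ) (ω : Fin h → Bool) (k : ℕ) : ℤ :=
  ∑ i : Fin h, if (i : ℕ) < k then (if ω i then 1 else -1) else 0

def Mcnt (z : ℤ) (k : ℕ) : ℕ :=
  (univ.filter (fun ω : Fin k → Bool => walkPos k ω k = z)).card

def Ncnt (z : ℤ) (k : ℕ) : ℕ :=
  (univ.filter (fun ω : Fin k → Bool =>
    walkPos k ω k = z ∧ ∀ j < k, walkPos k ω j ≠ z)).card

lemma walkPos_zero (m : ℕ) (ω : Fin m → Bool) : walkPos m ω 0 = 0 := by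
  simp [walkPos]

lemma walkPos_cons (k : ℕ) (b : Bool) (ω : Fin k → Bool) (j : ℕ) :
    walkPos (k+1) (Fin.cons b ω) (j+1) = (if b then 1 else -1) + walkPos k ω j := by
  unfold walkPos
  rw [Fin.sum_univ_succ]
  simp [Fin.cons_succ, Nat.succ_lt_succ_iff]

lemma card_split (k : ℕ) (p : (Fin (k+1) → Bool) → Prop) [DecidablePred p] :
    (univ.filter p).card
      = (univ.filter (fun ω => p (Fin.cons true ω))).card
        + (univ.filter (fun ω => p (Fin.cons false ω))).card := by
  rw [Finset.card_filter, Finset.card_filter, Finset.card_filter]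
  rw [← Fintype.sum_equiv (Fin.consEquiv (fun _ => Bool))
    (fun x => if p (Fin.cons x.1 x.2) then 1 else 0) (fun ω => if p ω then 1 else 0)
    (fun x => rfl)]
  rw [Fintype.sum_prod_type, Fintype.sum_bool]

lemma Mcnt_zero (z : ℤ) : Mcnt z 0 = if z = 0 then 1 else 0 := by
  unfold Mcnt
  split_ifs with hz
  · subst hz
    simp [walkPos_zero]
  · rw [Finset.card_eq_zero]
    ext ω
    simp only [mem_filter, mem_univ, true_and, Finset.notMem_empty, iff_false]
    rw [walkPos_zero]
    omega

lemma Ncnt_zero (z : ℤ) : Ncnt z 0 = if z = 0 then 1 else 0 := by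
  unfold Ncnt
  split_ifs with hz
  · subst hz
    simp [walkPos_zero]
  · rw [Finset.card_eq_zero]
    ext ω
    simp only [mem_filter, mem_univ, true_and, Finset.notMem_empty, iff_false]
    rw [walkPos_zero]
    intro h
    exact hz h.1.symm

lemma Ncnt_zero' (k : ℕ) (hk : 1 ≤ k) : Ncnt 0 k = 0 := by
  unfold Ncnt
  rw [Finset.card_eq_zero]
  ext ω
  simp only [mem_filter, mem_univ, true_and, Finset.notMem_empty, iff_false]
  rintro ⟨-, h2⟩
  exact h2 0 hk (walkPos_zero k ω)

lemma Mcnt_rec (z : ℤ) (k : ℕ) : Mcnt z (k+1) = Mcnt (z-1) k + Mcnt (z+1) k := by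
  unfold Mcnt
  rw [card_split k (fun ω => walkPos (k+1) ω (k+1) = z)]
  congr 1
  · refine congrArg Finset.card (Finset.filter_congr ?_)
    intro ω _
    rw [walkPos_cons]
    simp only [if_true]
    omega
  · refine congrArg Finset.card (Finset.filter_congr ?_)
    intro ω _
    rw [walkPos_cons]
    simp only [Bool.false_eq_true, if_false]
    omega

lemma Ncnt_rec (z : ℤ) (hz : 1 ≤ z) (k : ℕ) :
    Ncnt z (k+1) = Ncnt (z-1) k + Ncnt (z+1) k := by
  unfold Ncnt
  rw [card_split k (fun ω => walkPos (k+1) ω (k+1) = z ∧ ∀ j < k+1, walkPos (k+1) ω j ≠ z)]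
  have key : ∀ (b : Bool) (ω : Fin k → Bool),
      ((walkPos (k+1) (Fin.cons b ω) (k+1) = z ∧ ∀ j < k+1, walkPos (k+1) (Fin.cons b ω) j ≠ z)
        ↔ (walkPos k ω k = z - (if b then 1 else -1)
            ∧ ∀ j < k, walkPos k ω j ≠ z - (if b then 1 else -1))) := by
    intro b ω
    constructor
    · rintro ⟨h1, h2⟩
      rw [walkPos_cons] at h1
      refine ⟨by omega, ?_⟩
      intro j hj heq
      have := h2 (j+1) (by omega)
      rw [walkPos_cons] at this
      omega
    · rintro ⟨h1, h2⟩
      rw [walkPos_cons]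
      refine ⟨by omega, ?_⟩
      intro j hj
      match j with
      | 0 => rw [walkPos_zero]; omega
      | Nat.succ j' =>
        rw [walkPos_cons]
        have := h2 j' (by omega)
        omega
  congr 1
  · refine congrArg Finset.card (Finset.filter_congr ?_)
    intro ω _
    rw [key true ω]
    norm_num
  · refine congrArg Finset.card (Finset.filter_congr ?_)
    intro ω _
    rw [key false ω]
    norm_num

lemma absorb (k : ℕ) : ∀ z : ℤ,
    ((k : ℤ) + 1 - z) * Mcnt (z-1) k = ((k : ℤ) + 1 + z) * Mcnt (z+1) k := by
  induction k with
  | zero =>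
    intro z
    rw [Mcnt_zero, Mcnt_zero]
    split_ifs <;> simp <;> omega
  | succ k ih =>
    intro z
    rw [Mcnt_rec, Mcnt_rec]
    push_cast
    have h1 := ih (z-1)
    have h2 := ih (z+1)
    ring_nf at h1 h2 ⊢
    linear_combination h1 + h2

lemma main_id (h : ℕ) : ∀ z : ℤ, 0 ≤ z → (h : ℤ) * Ncnt z h = z * Mcnt z h := by
  induction h with
  | zero =>
    intro z hz
    rw [Mcnt_zero]
    split_ifs <;> simp <;> omega
  | succ h ih =>
    intro z hz
    rcases eq_or_lt_of_le hz with hz0 | hz1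
    · rw [← hz0, Ncnt_zero' (h+1) (by omega)]
      simp
    · have hz1 : 1 ≤ z := hz1
      rw [Ncnt_rec z hz1, Mcnt_rec]
      have ih1 := ih (z-1) (by omega)
      have ih2 := ih (z+1) (by omega)
      have habs := absorb h z
      rcases Nat.eq_zero_or_pos h with h0 | hpos
      · subst h0
        rw [Ncnt_zero, Ncnt_zero, Mcnt_zero, Mcnt_zero]
        push_cast
        split_ifs <;> push_cast <;> nlinarith [hz1]
      · have hne : (h : ℤ) ≠ 0 := by exact_mod_cast Nat.pos_iff_ne_zero.mp hpos
        apply mul_left_cancel₀ hne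
        push_cast
        ring_nf
        ring_nf at ih1 ih2 habs
        linear_combination ((h : ℤ) + 1) * ih1 + ((h : ℤ) + 1) * ih2 - habs

/-- Hitting time theorem: P(T_y = h) = (y/h) P(S_h = y). -/
theorem stmt10 (y h : ℕ) (hy : 1 ≤ y) (hyh : y ≤ h) :
    (Nat.card {ω : Fin h → Bool //
        walkPos h ω h = (y : ℤ) ∧ ∀ k < h, walkPos h ω k ≠ (y : ℤ)} : ℝ) / 2 ^ h
      = ((y : ℝ) / h) * ((Nat.card {ω : Fin h → Bool // walkPos h ω h = (y : ℤ)} : ℝ) / 2 ^ h) := by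
  have hM : Nat.card {ω : Fin h → Bool // walkPos h ω h = (y : ℤ)} = Mcnt y h := by
    rw [Nat.card_eq_fintype_card, Fintype.card_subtype]
    rfl
  have hN : Nat.card {ω : Fin h → Bool //
      walkPos h ω h = (y : ℤ) ∧ ∀ k < h, walkPos h ω k ≠ (y : ℤ)} = Ncnt y h := by
    rw [Nat.card_eq_fintype_card, Fintype.card_subtype]
    rfl
  rw [hM, hN]
  have key := main_id h (y : ℤ) (by positivity)
  have keyR : (h : ℝ) * (Ncnt (y : ℤ) h : ℝ) = (y : ℝ) * (Mcnt (y : ℤ) h : ℝ) := by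
    exact_mod_cast key
  have hh : (h : ℝ) ≠ 0 := by
    have : 1 ≤ h := le_trans hy hyh
    positivity
  have h2 : (2 : ℝ) ^ h ≠ 0 := by positivity
  field_simp
  linear_combination keyR
end
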